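/- arXiv:2410.04728 — 8 statements merged into one kernel-verified Lean document; each statement's English description precedes it below -/
import Mathlib

section
/- For every integer n ≥ 4, g(n) ≤ 2n. -/
/-- `Corr n k` says there is a square-product sequence (a nonempty finite set of
positive integers whose product is a perfect square) with least term `n` and
greatest term `k`. -/
def Corr (n k : ℕ) : Prop :=
  ∃ S : Finset ℕ, (∀ a ∈ S, 0 < a) ∧ IsSquare (∏ a ∈ S, a) ∧
    n ∈ S ∧ k ∈ S ∧ ∀ a ∈ S, n ≤ a ∧ a ≤ k

/-- Ron Graham's sequence: the least `k` such that there is a square-product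
sequence with least term `n` and greatest term `k`. -/
noncomputable def g (n : ℕ) : ℕ := sInf {k | Corr n k}

lemma corr_self (n : ℕ) (hpos : 0 < n) (hsq : IsSquare n) : Corr n n := by
  refine ⟨{n}, ?_, ?_, ?_, ?_, ?_⟩ <;> simp [hpos, hsq]

lemma corr_eight : Corr 8 15 := by
  refine ⟨{8, 10, 12, 15}, ?_, ?_, ?_, ?_, ?_⟩
  · decide
  · refine ⟨120, ?_⟩; decide
  · decide
  · decide
  · decide

theorem g_le_two_mul (n : ℕ) (hn : 4 ≤ n) : g n ≤ 2 * n := by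
  by_cases hsq : IsSquare n
  · have h := corr_self n (by omega) hsq
    have : g n ≤ n := Nat.sInf_le h
    omega
  by_cases h8 : n = 8
  · subst h8
    have : g 8 ≤ 15 := Nat.sInf_le corr_eight
    omega
  · set m := Nat.sqrt n with hm
    have hmle : m * m ≤ n := Nat.sqrt_le n
    have hmne : m * m ≠ n := by
      intro h; exact hsq ⟨m, h.symm⟩
    have hmlt : m * m < n := lt_of_le_of_ne hmle hmne
    have hm2 : 2 ≤ m := by
      rw [hm, Nat.le_sqrt]; omega
    have hlt : n < (m + 1) * (m + 1) := Nat.lt_succ_sqrt n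
    have hkey : n < 2 * (m * m) := by
      by_contra hc
      push_neg at hc
      -- 2 m² ≤ n < (m+1)², so m² < 2m+1, m ≤ 2, so m = 2, n = 8
      have hm3 : m ≤ 2 := by nlinarith
      have hme : m = 2 := le_antisymm hm3 hm2
      rw [hme] at hc hlt
      omega
    have h2lt : 2 * (m * m) < 2 * n := by omega
    have hcorr : Corr n (2 * n) := by
      refine ⟨{n, 2 * (m * m), 2 * n}, ?_, ?_, ?_, ?_, ?_⟩
      · intro a ha
        simp only [Finset.mem_insert, Finset.mem_singleton] at ha
        rcases ha with rfl | rfl | rfl <;> omega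
      · have hne1 : n ∉ ({2 * (m * m), 2 * n} : Finset ℕ) := by
          simp only [Finset.mem_insert, Finset.mem_singleton]; omega
        have hne2 : 2 * (m * m) ∉ ({2 * n} : Finset ℕ) := by
          simp only [Finset.mem_singleton]; omega
        rw [Finset.prod_insert hne1, Finset.prod_insert hne2, Finset.prod_singleton]
        exact ⟨2 * m * n, by ring⟩
      · simp
      · simp
      · intro a ha
        simp only [Finset.mem_insert, Finset.mem_singleton] at ha
        rcases ha with rfl | rfl | rfl <;> omega
    exact Nat.sInf_le hcorr
end

section
/- For every prime p > 3, g(p) = 2p. -/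
/-- For a prime `p > 3`, there is `k` with `p < 2k² < 2p`. -/
lemma exists_mid (p : ℕ) (hp : p.Prime) (hp3 : 3 < p) :
    ∃ k : ℕ, p < 2 * (k * k) ∧ 2 * (k * k) < 2 * p := by
  obtain ⟨q, hq⟩ := hp.odd_of_ne_two (by omega)
  have hq2 : 2 ≤ q := by omega
  set s := Nat.sqrt q with hs
  have hub : s * s ≤ q := by simpa [pow_two] using Nat.sqrt_le' q
  have hlb : q < (s + 1) * (s + 1) := by
    simpa [Nat.succ_eq_add_one, pow_two] using Nat.lt_succ_sqrt' q
  have hs1 : 1 ≤ s := by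
    rcases Nat.eq_zero_or_pos s with h | h
    · rw [h] at hlb; norm_num at hlb; omega
    · exact h
  refine ⟨s + 1, by nlinarith, ?_⟩
  -- need (s+1)*(s+1) < p = 2q+1
  rcases eq_or_lt_of_le hs1 with h1 | h2
  · -- s = 1, k = 2, k² = 4 < 5 ≤ p
    rw [← h1] at hub hlb ⊢
    omega
  · -- s ≥ 2 : (s+1)² ≤ 2s²+1 ≤ 2q+1 = p, and ≠ p since p prime
    have hle : (s + 1) * (s + 1) ≤ p := by nlinarith
    rcases lt_or_eq_of_le hle with h | h
    · omega
    · exfalso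
      have hdvd : (s + 1) ∣ p := ⟨s + 1, h.symm⟩
      rcases (Nat.Prime.eq_one_or_self_of_dvd hp _ hdvd) with h' | h'
      · omega
      · nlinarith

theorem g_prime (p : ℕ) (hp : p.Prime) (hp3 : 3 < p) : g p = 2 * p := by
  have hp0 : 0 < p := hp.pos
  -- lower bound: any k with `Corr p k` satisfies `2p ≤ k`
  have hlow : ∀ k, Corr p k → 2 * p ≤ k := by
    rintro k ⟨S, hpos, ⟨r, hr⟩, hpS, hkS, hb⟩
    by_contra h
    push_neg at h
    have hnd : ∀ a ∈ S.erase p, ¬ p ∣ a := by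
      intro a ha hdvd
      have haS := Finset.mem_of_mem_erase ha
      have hane := Finset.ne_of_mem_erase ha
      obtain ⟨m, rfl⟩ := hdvd
      have h1 : p ≤ p * m := (hb _ haS).1
      have h2 : p * m < 2 * p := lt_of_le_of_lt (hb _ haS).2 h
      have hm : m = 1 := by
        rcases m with _ | _ | m
        · simp at h1; omega
        · rfl
        · exfalso
          have : p * 2 ≤ p * (m + 1 + 1) := Nat.mul_le_mul_left p (by omega)
          omega
      subst hm
      exact hane (mul_one p)
    have hprod : ∏ a ∈ S, a = p * ∏ a ∈ S.erase p, a :=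
      (Finset.mul_prod_erase S _ hpS).symm
    have hpd : ¬ p ∣ ∏ a ∈ S.erase p, a := by
      intro hd
      obtain ⟨a, ha, hpa⟩ := hp.prime.exists_mem_finset_dvd hd
      exact hnd a ha hpa
    have hpr : p ∣ r := by
      have : p ∣ r * r := by
        rw [← hr, hprod]; exact dvd_mul_right _ _
      exact hp.prime.dvd_mul.mp this |>.elim id id
    obtain ⟨t, rfl⟩ := hpr
    apply hpd
    have heq : p * ∏ a ∈ S.erase p, a = p * (p * t * t) := by
      rw [← hprod, hr]; ring
    have h2 : ∏ a ∈ S.erase p, a = p * t * t :=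
      Nat.eq_of_mul_eq_mul_left hp0 heq
    rw [h2]
    exact ⟨t * t, by ring⟩
  -- upper bound: Corr p (2p)
  obtain ⟨k, hk1, hk2⟩ := exists_mid p hp hp3
  have hupper : Corr p (2 * p) := by
    refine ⟨{p, 2 * (k * k), 2 * p}, ?_, ?_, ?_, ?_, ?_⟩
    · intro a ha
      simp only [Finset.mem_insert, Finset.mem_singleton] at ha
      rcases ha with rfl | rfl | rfl <;> omega
    · have hne1 : p ≠ 2 * (k * k) := by omega
      have hne2 : p ≠ 2 * p := by omega
      have hne3 : 2 * (k * k) ≠ 2 * p := by omega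
      rw [Finset.prod_insert (by simp [hne1, hne2]),
        Finset.prod_insert (by simp [hne3]), Finset.prod_singleton]
      exact ⟨2 * p * k, by ring⟩
    · simp
    · simp
    · intro a ha
      simp only [Finset.mem_insert, Finset.mem_singleton] at ha
      rcases ha with rfl | rfl | rfl <;> omega
  apply le_antisymm
  · exact Nat.sInf_le hupper
  · exact le_csInf ⟨2 * p, hupper⟩ hlow
end

section
/- Ron Graham's sequence is injective: for all positive integers n and n', if g(n) = g(n') then n = n'. -/
/-
If `g n = g n' = k` with `n < n'`, take square-product sets `S` and `S'` realising `Corr n k` and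
`Corr n' k`. Their symmetric difference again has square product, since
`∏ (S ∆ S') * (∏ (S ∩ S'))² = ∏ S * ∏ S'`. It contains `n` (every element of `S'` is at least
`n' > n`) but not `k` (which lies in both), so its largest element is a term `< k` realising
`Corr n`, contradicting the minimality of `g n`.
-/

open Finset
open scoped symmDiff

theorem Finset.prod_symmDiff_mul_prod_inter_sq {ι M : Type*} [CommMonoid M] [DecidableEq ι]
    (s t : Finset ι) (f : ι → M) :
    (∏ i ∈ s ∆ t, f i) * (∏ i ∈ s ∩ t, f i) ^ 2 = (∏ i ∈ s, f i) * ∏ i ∈ t, f i := by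
  rw [symmDiff_eq_sup_sdiff_inf, sq, ← mul_assoc, sup_eq_union, inf_eq_inter,
    prod_sdiff inter_subset_union, prod_union_inter]

theorem Nat.isSquare_of_isSquare_mul_sq {a c : ℕ} (hc : c ≠ 0) (h : IsSquare (a * c ^ 2)) :
    IsSquare a := by
  have hcast : IsSquare ((a : ℚ) * (c : ℚ) ^ 2) := by exact_mod_cast Rat.isSquare_natCast_iff.mpr h
  have hc' : ((c : ℚ) ^ 2) ≠ 0 := by positivity
  rw [← Rat.isSquare_natCast_iff, ← mul_div_cancel_right₀ (a : ℚ) hc']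
  exact hcast.div (IsSquare.sq _)

theorem Nat.isSquare_prod_symmDiff {ι : Type*} [DecidableEq ι] {s t : Finset ι} {f : ι → ℕ}
    (hf : ∀ i ∈ s ∩ t, f i ≠ 0) (hs : IsSquare (∏ i ∈ s, f i)) (ht : IsSquare (∏ i ∈ t, f i)) :
    IsSquare (∏ i ∈ s ∆ t, f i) := by
  refine Nat.isSquare_of_isSquare_mul_sq (prod_ne_zero_iff.mpr hf) ?_
  rw [prod_symmDiff_mul_prod_inter_sq]
  exact hs.mul ht

theorem corr_max' {n : ℕ} {T : Finset ℕ} (hpos : ∀ a ∈ T, 0 < a) (hsq : IsSquare (∏ a ∈ T, a))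
    (hn : n ∈ T) (hmin : ∀ a ∈ T, n ≤ a) : Corr n (T.max' ⟨n, hn⟩) :=
  ⟨T, hpos, hsq, hn, T.max'_mem _, fun a ha => ⟨hmin a ha, T.le_max' a ha⟩⟩

theorem corr_four_mul {n : ℕ} (hn : 0 < n) : Corr n (4 * n) := by
  refine ⟨{n, 4 * n}, ?_, ?_, by simp, by simp, ?_⟩
  · simp [hn]
  · rw [prod_pair (by omega)]
    exact ⟨2 * n, by ring⟩
  · simp only [mem_insert, mem_singleton, forall_eq_or_imp, forall_eq]
    omega

theorem corr_g {n : ℕ} (hn : 0 < n) : Corr n (g n) :=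
  Nat.sInf_mem (s := {k | Corr n k}) ⟨4 * n, corr_four_mul hn⟩

theorem g_le_of_corr {n k : ℕ} (h : Corr n k) : g n ≤ k :=
  Nat.sInf_le h

theorem exists_lt_corr_of_corr_of_corr {n n' k : ℕ} (hlt : n < n') (h : Corr n k)
    (h' : Corr n' k) : ∃ m < k, Corr n m := by
  obtain ⟨S, hpos, hsq, hnS, hkS, hS⟩ := h
  obtain ⟨S', hpos', hsq', -, hkS', hS'⟩ := h'
  have hnT : n ∈ S ∆ S' := mem_symmDiff.mpr (.inl ⟨hnS, fun hn => (hS' n hn).1.not_gt hlt⟩)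
  have hkT : k ∉ S ∆ S' := by simp [mem_symmDiff, hkS, hkS']
  have hT : ∀ a ∈ S ∆ S', 0 < a ∧ n ≤ a ∧ a ≤ k := by
    intro a ha
    rcases mem_symmDiff.mp ha with ⟨ha, -⟩ | ⟨ha, -⟩
    · exact ⟨hpos a ha, hS a ha⟩
    · exact ⟨hpos' a ha, hlt.le.trans (hS' a ha).1, (hS' a ha).2⟩
  have hsqT : IsSquare (∏ a ∈ S ∆ S', a) :=
    Nat.isSquare_prod_symmDiff (fun a ha => (hpos a (mem_inter.mp ha).1).ne') hsq hsq'
  have hmax := max'_mem _ ⟨n, hnT⟩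
  refine ⟨_, lt_of_le_of_ne (hT _ hmax).2.2 (fun hk => hkT (hk ▸ hmax)),
    corr_max' (fun a ha => (hT a ha).1) hsqT hnT (fun a ha => (hT a ha).2.1)⟩

theorem g_ne_g_of_lt {n n' : ℕ} (hn : 0 < n) (hlt : n < n') : g n ≠ g n' := by
  intro h
  obtain ⟨m, hm, hcorr⟩ :=
    exists_lt_corr_of_corr_of_corr hlt (corr_g hn) (h ▸ corr_g (hn.trans hlt))
  exact (g_le_of_corr hcorr).not_gt hm

theorem g_injective (n n' : ℕ) (hn : 0 < n) (hn' : 0 < n') (h : g n = g n') : n = n' := by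
  rcases lt_trichotomy n n' with hlt | heq | hgt
  · exact absurd h (g_ne_g_of_lt hn hlt)
  · exact heq
  · exact absurd h.symm (g_ne_g_of_lt hn' hgt)
end

section
/- For every positive integer k that is not prime, g(ḡ(k)) = k. -/
open scoped symmDiff


/-- `gbar k` is the greatest `n` such that there is a square-product sequence
with least term `n` and greatest term `k`. -/
noncomputable def gbar (k : ℕ) : ℕ := sSup {n | Corr n k}

private lemma sq_cancel {x s : ℕ} (hs : 0 < s) (h : IsSquare (x * (s * s))) : IsSquare x := by
  obtain ⟨r, hr⟩ := h
  have hdvd : s ∣ r := by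
    have h2 : s ^ 2 ∣ r ^ 2 := ⟨x, by rw [sq, sq, ← hr]; ring⟩
    exact (Nat.pow_dvd_pow_iff two_ne_zero).1 h2
  obtain ⟨c, rfl⟩ := hdvd
  refine ⟨c, ?_⟩
  have hx : x * (s * s) = (c * c) * (s * s) := by rw [hr]; ring
  exact Nat.eq_of_mul_eq_mul_right (Nat.mul_pos hs hs) hx

private lemma prod_symmDiff_mul (S T : Finset ℕ) :
    (∏ a ∈ S ∆ T, a) * ((∏ a ∈ S ∩ T, a) * (∏ a ∈ S ∩ T, a)) =
      (∏ a ∈ S, a) * (∏ a ∈ T, a) := by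
  have hS : (∏ a ∈ S \ T, a) * (∏ a ∈ S ∩ T, a) = ∏ a ∈ S, a := by
    have := Finset.prod_sdiff (f := id) (Finset.inter_subset_left (s₁ := S) (s₂ := T))
    simpa [Finset.sdiff_inter_self_left] using this
  have hT : (∏ a ∈ T \ S, a) * (∏ a ∈ T ∩ S, a) = ∏ a ∈ T, a := by
    have := Finset.prod_sdiff (f := id) (Finset.inter_subset_left (s₁ := T) (s₂ := S))
    simpa [Finset.sdiff_inter_self_left] using this
  have hU : (∏ a ∈ S ∆ T, a) = (∏ a ∈ S \ T, a) * (∏ a ∈ T \ S, a) := by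
    rw [symmDiff_def, Finset.sup_eq_union, Finset.prod_union disjoint_sdiff_sdiff]
  rw [hU, ← hS, ← hT, Finset.inter_comm T S]
  ring

private lemma corr_step {N k k' : ℕ} (hS : Corr N k) (hT : Corr N k') (hlt : k' < k) :
    ∃ m, N < m ∧ Corr m k := by
  obtain ⟨S, hSpos, hSsq, hNS, hkS, hSb⟩ := hS
  obtain ⟨T, hTpos, hTsq, hNT, hkT, hTb⟩ := hT
  have hkU : k ∈ S ∆ T := by
    rw [Finset.mem_symmDiff]
    left
    refine ⟨hkS, fun hkTm => ?_⟩
    exact absurd ((hTb k hkTm).2) (by omega)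
  have hne : (S ∆ T).Nonempty := ⟨k, hkU⟩
  set m := (S ∆ T).min' hne with hm
  have hmU : m ∈ S ∆ T := Finset.min'_mem _ _
  have hmem : ∀ a ∈ S ∆ T, a ∈ S ∨ a ∈ T := by
    intro a ha
    rw [Finset.mem_symmDiff] at ha
    tauto
  have hNm : N < m := by
    have h1 : N ≤ m := by
      rcases hmem m hmU with h | h
      · exact (hSb m h).1
      · exact (hTb m h).1
    have h2 : N ∉ S ∆ T := by
      rw [Finset.mem_symmDiff]
      push_neg
      exact ⟨fun _ => hNT, fun _ => hNS⟩
    rcases eq_or_lt_of_le h1 with h | h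
    · exact absurd hmU (h ▸ h2)
    · exact h
  refine ⟨m, hNm, S ∆ T, ?_, ?_, hmU, hkU, ?_⟩
  · intro a ha
    rcases hmem a ha with h | h
    · exact hSpos a h
    · exact hTpos a h
  · have hpos : 0 < ∏ a ∈ S ∩ T, a := by
      apply Finset.prod_pos
      intro a ha
      exact hSpos a (Finset.mem_inter.1 ha).1
    apply sq_cancel hpos
    rw [prod_symmDiff_mul]
    obtain ⟨r, hr⟩ := hSsq
    obtain ⟨r', hr'⟩ := hTsq
    exact ⟨r * r', by rw [hr, hr']; ring⟩
  · intro a ha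
    refine ⟨Finset.min'_le _ _ ha, ?_⟩
    rcases hmem a ha with h | h
    · exact (hSb a h).2
    · exact le_trans (hTb a h).2 hlt.le

private lemma corr_le {n k : ℕ} (h : Corr n k) : n ≤ k := by
  obtain ⟨S, _, _, hnS, _, hb⟩ := h
  exact (hb n hnS).2

private lemma corr_exists {k : ℕ} (hk : 0 < k) (hk' : ¬ k.Prime) : ∃ n, Corr n k := by
  by_cases hsq : IsSquare k
  · refine ⟨k, {k}, ?_, ?_, ?_, ?_, ?_⟩ <;> simp [hk, hsq]
  · have hk1 : k ≠ 1 := by rintro rfl; exact hsq ⟨1, rfl⟩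
    have hk2 : 2 ≤ k := by omega
    set p := k.minFac with hp
    have hpp : p.Prime := Nat.minFac_prime hk1
    have hpd : p ∣ k := Nat.minFac_dvd k
    set b := k / p with hb
    have hbk : b * p = k := Nat.div_mul_cancel hpd
    have hbd : b ∣ k := ⟨p, hbk.symm⟩
    have hb0 : 0 < b := Nat.div_pos (Nat.minFac_le hk) hpp.pos
    have hb1 : b ≠ 1 := by
      rintro h
      rw [h, one_mul] at hbk
      exact hk' (hbk ▸ hpp)
    have hpb : p ≤ b := Nat.minFac_le_of_dvd (by omega) hbd
    have hpneb : p ≠ b := by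
      intro h
      exact hsq ⟨p, by rw [← hbk, h]⟩
    have hblt : b < k := Nat.div_lt_self hk hpp.two_le
    have hpk : p < k := lt_of_le_of_lt (lt_of_le_of_ne hpb hpneb).le hblt
    refine ⟨p, {p, b, k}, ?_, ?_, ?_, ?_, ?_⟩
    · intro a ha
      simp only [Finset.mem_insert, Finset.mem_singleton] at ha
      rcases ha with rfl | rfl | rfl
      · exact hpp.pos
      · exact hb0
      · exact hk
    · have hprod : (∏ a ∈ ({p, b, k} : Finset ℕ), a) = k * k := by
        rw [Finset.prod_insert (by simp; omega), Finset.prod_insert (by simp; omega),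
          Finset.prod_singleton]
        rw [← hbk]; ring
      exact ⟨k, by rw [hprod]⟩
    · simp
    · simp
    · intro a ha
      simp only [Finset.mem_insert, Finset.mem_singleton] at ha
      rcases ha with rfl | rfl | rfl <;> omega

theorem g_gbar (k : ℕ) (hk : 0 < k) (hk' : ¬ k.Prime) : g (gbar k) = k := by
  have h0 : {n | Corr n k}.Nonempty := corr_exists hk hk'
  have hbdd : BddAbove {n | Corr n k} := ⟨k, fun n hn => corr_le hn⟩
  have hNA : Corr (gbar k) k := Nat.sSup_mem h0 hbdd
  have hBne : {k' | Corr (gbar k) k'}.Nonempty := ⟨k, hNA⟩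
  have h1 : g (gbar k) ≤ k := Nat.sInf_le hNA
  have h2 : g (gbar k) ∈ {k' | Corr (gbar k) k'} := Nat.sInf_mem hBne
  rcases lt_or_ge (g (gbar k)) k with hlt | hge
  · exfalso
    obtain ⟨m, hm, hmC⟩ := corr_step hNA h2 hlt
    have : m ≤ gbar k := le_csSup hbdd hmC
    omega
  · omega
end

section
/- For every positive integer n, there exists a nonnegative integer N such that the number of square-product sequences with least term n and greatest term g(n) is exactly 2^N. -/
open scoped symmDiff

lemma sq_helper {a b : ℕ} (hb : b ≠ 0) (h : IsSquare (a * b ^ 2)) : IsSquare a := by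
  obtain ⟨c, hc⟩ := h
  have hbc : b ∣ c := by
    have h2 : b ^ 2 ∣ c ^ 2 := ⟨a, by rw [sq, ← hc]; ring⟩
    exact (Nat.pow_dvd_pow_iff two_ne_zero).mp h2
  obtain ⟨d, rfl⟩ := hbc
  have hb2 : 0 < b ^ 2 := by positivity
  have h2 : b ^ 2 * a = b ^ 2 * (d * d) := by rw [mul_comm (b ^ 2) a, hc]; ring
  exact ⟨d, Nat.eq_of_mul_eq_mul_left hb2 h2⟩

lemma prod_symmDiff_sq (s t : Finset ℕ) :
    (∏ a ∈ s ∆ t, a) * (∏ a ∈ s ∩ t, a) ^ 2 = (∏ a ∈ s, a) * (∏ a ∈ t, a) := by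
  have hd : Disjoint (s ∆ t) (s ∩ t) := disjoint_symmDiff_inf s t
  have hu : (s ∆ t) ∪ (s ∩ t) = s ∪ t := symmDiff_sup_inf s t
  calc (∏ a ∈ s ∆ t, a) * (∏ a ∈ s ∩ t, a) ^ 2
      = ((∏ a ∈ s ∆ t, a) * (∏ a ∈ s ∩ t, a)) * (∏ a ∈ s ∩ t, a) := by ring
    _ = (∏ a ∈ s ∪ t, a) * (∏ a ∈ s ∩ t, a) := by rw [← Finset.prod_union hd, hu]
    _ = _ := Finset.prod_union_inter

lemma pow_two_card (A : Finset ℕ) : ∀ (W : Set (Finset ℕ)),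
    (∀ S ∈ W, S ⊆ A) → (∅ ∈ W) → (∀ S ∈ W, ∀ T ∈ W, S ∆ T ∈ W) →
    ∃ N, W.ncard = 2 ^ N := by
  induction A using Finset.induction_on with
  | empty =>
    intro W hA h0 _
    refine ⟨0, ?_⟩
    have : W = {∅} := by
      apply Set.eq_singleton_iff_unique_mem.mpr
      exact ⟨h0, fun S hS => Finset.subset_empty.mp (hA S hS)⟩
    rw [this]; simp
  | @insert m A hm ih =>
    intro W hA h0 hcl
    have hWfin : W.Finite := Set.Finite.subset (Finset.finite_toSet (insert m A).powerset)
      (fun S hS => Finset.mem_coe.mpr (Finset.mem_powerset.mpr (hA S hS)))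
    set W0 : Set (Finset ℕ) := {S ∈ W | m ∉ S} with hW0
    set W1 : Set (Finset ℕ) := {S ∈ W | m ∈ S} with hW1
    have hA0 : ∀ S ∈ W0, S ⊆ A := by
      intro S hS a ha
      have := hA S hS.1 ha
      rcases Finset.mem_insert.mp this with h | h
      · exact absurd (h ▸ ha) hS.2
      · exact h
    have hcl0 : ∀ S ∈ W0, ∀ T ∈ W0, S ∆ T ∈ W0 := by
      intro S hS T hT
      refine ⟨hcl S hS.1 T hT.1, ?_⟩
      rw [Finset.mem_symmDiff]
      rintro (⟨h, _⟩ | ⟨h, _⟩)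
      · exact hS.2 h
      · exact hT.2 h
    obtain ⟨N, hN⟩ := ih W0 hA0 ⟨h0, Finset.notMem_empty m⟩ hcl0
    have hsplit : W = W0 ∪ W1 := by
      ext S; constructor
      · intro hS; by_cases h : m ∈ S
        · exact Or.inr ⟨hS, h⟩
        · exact Or.inl ⟨hS, h⟩
      · rintro (h | h) <;> exact h.1
    have hdisj : Disjoint W0 W1 := by
      rw [Set.disjoint_left]; rintro S ⟨_, h0'⟩ ⟨_, h1'⟩; exact h0' h1'
    have hfin0 : W0.Finite := hWfin.subset (fun S hS => hS.1)
    have hfin1 : W1.Finite := hWfin.subset (fun S hS => hS.1)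
    have hcard : W.ncard = W0.ncard + W1.ncard := by
      rw [hsplit, Set.ncard_union_eq hdisj hfin0 hfin1]
    by_cases h1 : W1 = ∅
    · refine ⟨N, ?_⟩; rw [hcard, h1]; simp [hN]
    · obtain ⟨x, hx⟩ := Set.nonempty_iff_ne_empty.mpr h1
      have himg : W1 = (fun S => S ∆ x) '' W0 := by
        ext T; constructor
        · intro hT
          refine ⟨T ∆ x, ⟨hcl T hT.1 x hx.1, ?_⟩, symmDiff_symmDiff_cancel_right x T⟩
          rw [Finset.mem_symmDiff]
          rintro (⟨_, h⟩ | ⟨_, h⟩)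
          · exact h hx.2
          · exact h hT.2
        · rintro ⟨U, hU, rfl⟩
          refine ⟨hcl U hU.1 x hx.1, ?_⟩
          rw [Finset.mem_symmDiff]
          exact Or.inr ⟨hx.2, hU.2⟩
      have hinj : Function.Injective (fun S : Finset ℕ => S ∆ x) :=
        Function.Involutive.injective (fun S => symmDiff_symmDiff_cancel_right x S)
      have : W1.ncard = W0.ncard := by
        rw [himg, Set.ncard_image_of_injective _ hinj]
      refine ⟨N + 1, ?_⟩
      rw [hcard, this, hN]; ring

theorem card_corresponding_eq_two_pow (n : ℕ) (hn : 0 < n) :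
    ∃ N : ℕ,
      {S : Finset ℕ | (∀ a ∈ S, 0 < a) ∧ IsSquare (∏ a ∈ S, a) ∧
        n ∈ S ∧ g n ∈ S ∧ ∀ a ∈ S, n ≤ a ∧ a ≤ g n}.ncard = 2 ^ N := by
  have h4 : Corr n (4 * n) := by
    refine ⟨{n, 4 * n}, ?_, ?_, ?_, ?_, ?_⟩
    · intro a ha
      rcases Finset.mem_insert.mp ha with rfl | ha
      · exact hn
      · rw [Finset.mem_singleton] at ha; omega
    · rw [Finset.prod_pair (by omega : n ≠ 4 * n)]
      exact ⟨2 * n, by ring⟩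
    · simp
    · simp
    · intro a ha
      rcases Finset.mem_insert.mp ha with rfl | ha
      · omega
      · rw [Finset.mem_singleton] at ha; omega
  have hg : Corr n (g n) := Nat.sInf_mem (⟨4 * n, h4⟩ : {k | Corr n k}.Nonempty)
  obtain ⟨S₀, hpos₀, hsq₀, hn₀, hgn₀, hbd₀⟩ := hg
  set I := Finset.Ioo n (g n) with hI
  set W : Set (Finset ℕ) := {U | U ⊆ I ∧ IsSquare (∏ a ∈ U, a)} with hW
  have hposI : ∀ U : Finset ℕ, U ⊆ I → ∀ a ∈ U, 0 < a := by
    intro U hU a ha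
    have := (Finset.mem_Ioo.mp (hU ha)).1
    omega
  have hsqDiff : ∀ U V : Finset ℕ, (∀ a ∈ U, 0 < a) → (∀ a ∈ V, 0 < a) →
      IsSquare (∏ a ∈ U, a) → IsSquare (∏ a ∈ V, a) →
      IsSquare (∏ a ∈ U ∆ V, a) := by
    intro U V hU hV h1 h2
    apply sq_helper (b := ∏ a ∈ U ∩ V, a)
    · exact (Finset.prod_pos fun a ha => hU a (Finset.mem_inter.mp ha).1).ne'
    · rw [prod_symmDiff_sq]; exact h1.mul h2
  have hcl : ∀ U ∈ W, ∀ V ∈ W, U ∆ V ∈ W := by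
    intro U hU V hV
    constructor
    · intro a ha
      rcases Finset.mem_symmDiff.mp ha with ⟨h, _⟩ | ⟨h, _⟩
      · exact hU.1 h
      · exact hV.1 h
    · exact hsqDiff U V (hposI U hU.1) (hposI V hV.1) hU.2 hV.2
  have h0 : ∅ ∈ W := ⟨Finset.empty_subset I, by simp⟩
  have hnI : n ∉ I := by simp [hI]
  have hgI : g n ∉ I := by simp [hI]
  have hset : {S : Finset ℕ | (∀ a ∈ S, 0 < a) ∧ IsSquare (∏ a ∈ S, a) ∧
        n ∈ S ∧ g n ∈ S ∧ ∀ a ∈ S, n ≤ a ∧ a ≤ g n} = (fun U => U ∆ S₀) '' W := by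
    ext S
    constructor
    · rintro ⟨hp, hs, hnS, hgS, hb⟩
      refine ⟨S ∆ S₀, ⟨?_, hsqDiff S S₀ hp hpos₀ hs hsq₀⟩,
        symmDiff_symmDiff_cancel_right S₀ S⟩
      intro a ha
      rw [Finset.mem_Ioo]
      rcases Finset.mem_symmDiff.mp ha with ⟨h, h'⟩ | ⟨h, h'⟩
      · have hb1 := hb a h
        constructor
        · rcases Nat.lt_or_ge n a with h2 | h2
          · exact h2
          · exact absurd (by omega : a = n) (fun e => h' (e ▸ hn₀))
        · rcases Nat.lt_or_ge a (g n) with h2 | h2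
          · exact h2
          · exact absurd (by omega : a = g n) (fun e => h' (e ▸ hgn₀))
      · have hb1 := hbd₀ a h
        constructor
        · rcases Nat.lt_or_ge n a with h2 | h2
          · exact h2
          · exact absurd (by omega : a = n) (fun e => h' (e ▸ hnS))
        · rcases Nat.lt_or_ge a (g n) with h2 | h2
          · exact h2
          · exact absurd (by omega : a = g n) (fun e => h' (e ▸ hgS))
    · rintro ⟨U, hU, rfl⟩
      have hUpos := hposI U hU.1
      refine ⟨?_, hsqDiff U S₀ hUpos hpos₀ hU.2 hsq₀, ?_, ?_, ?_⟩
      · intro a ha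
        rcases Finset.mem_symmDiff.mp ha with ⟨h, _⟩ | ⟨h, _⟩
        · exact hUpos a h
        · exact hpos₀ a h
      · exact Finset.mem_symmDiff.mpr (Or.inr ⟨hn₀, fun h => hnI (hU.1 h)⟩)
      · exact Finset.mem_symmDiff.mpr (Or.inr ⟨hgn₀, fun h => hgI (hU.1 h)⟩)
      · intro a ha
        rcases Finset.mem_symmDiff.mp ha with ⟨h, _⟩ | ⟨h, _⟩
        · have := Finset.mem_Ioo.mp (hU.1 h); omega
        · exact hbd₀ a h
  have hinj : Function.Injective (fun U : Finset ℕ => U ∆ S₀) :=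
    Function.Involutive.injective (fun U => symmDiff_symmDiff_cancel_right S₀ U)
  obtain ⟨N, hN⟩ := pow_two_card I W (fun U hU => hU.1) h0 hcl
  exact ⟨N, by rw [hset, Set.ncard_image_of_injective _ hinj, hN]⟩
end

section
/- Let n be a positive integer and write n = m·r² where m is squarefree (m is the squarefree part of n and r² is the largest square dividing n). Then f(n) = m·(r+1)². -/
/-!
If `m * r ^ 2 * k` is a square, cancelling `r ^ 2` leaves the square `m * k`; as `m` is
squarefree (hence radical), `m` divides its square root, so `k = m * t ^ 2`. The condition
`n < k` then reads `r < t`, and `t = r + 1` is the smallest choice.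
-/

/-- `f n` is the least integer `k > n` such that `n * k` is a perfect square. -/
noncomputable def f (n : ℕ) : ℕ := sInf {k | n < k ∧ IsSquare (n * k)}

theorem isSquare_of_isSquare_sq_mul {R : Type*} [CommMonoidWithZero R]
    [UniqueFactorizationMonoid R] {r x : R} (hr : r ≠ 0) (h : IsSquare (r ^ 2 * x)) :
    IsSquare x := by
  obtain ⟨c, hc⟩ := h
  obtain ⟨d, rfl⟩ : r ∣ c :=
    (UniqueFactorizationMonoid.pow_dvd_pow_iff_dvd two_ne_zero).1 ⟨x, by rw [sq c, ← hc]⟩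
  refine ⟨d, mul_left_cancel₀ (pow_ne_zero 2 hr) ?_⟩
  rw [hc, sq, mul_mul_mul_comm]

theorem Squarefree.exists_eq_mul_sq_of_isSquare_mul {R : Type*} [CommMonoidWithZero R]
    [IsCancelMulZero R] [DecompositionMonoid R] [Nontrivial R] {x k : R} (hx : Squarefree x)
    (h : IsSquare (x * k)) : ∃ t, k = x * t ^ 2 := by
  obtain ⟨d, hd⟩ := h
  obtain ⟨t, rfl⟩ : x ∣ d := (hx.dvd_pow_iff_dvd two_ne_zero).1 ⟨k, by rw [sq, ← hd]⟩
  refine ⟨t, mul_left_cancel₀ hx.ne_zero ?_⟩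
  rw [hd, sq, mul_mul_mul_comm, mul_assoc]

theorem f_eq (n m r : ℕ) (hn : 0 < n) (hnmr : n = m * r ^ 2) (hm : Squarefree m) :
    f n = m * (r + 1) ^ 2 := by
  subst hnmr
  have hr : r ≠ 0 := by rintro rfl; simp at hn
  refine IsLeast.csInf_eq ⟨⟨?_, m * r * (r + 1), by ring⟩, ?_⟩
  · exact Nat.mul_lt_mul_of_pos_left (Nat.pow_lt_pow_left r.lt_succ_self two_ne_zero)
      (Nat.pos_of_ne_zero hm.ne_zero)
  rintro k ⟨hk, hsq⟩
  rw [show m * r ^ 2 * k = r ^ 2 * (m * k) by ring] at hsq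
  obtain ⟨t, rfl⟩ := hm.exists_eq_mul_sq_of_isSquare_mul (isSquare_of_isSquare_sq_mul hr hsq)
  have hrt : r < t := lt_of_pow_lt_pow_left₀ 2 t.zero_le (lt_of_mul_lt_mul_left hk m.zero_le)
  exact Nat.mul_le_mul_left m (Nat.pow_le_pow_left hrt 2)
end

section
/- For every positive integer n, T(n) ≠ 2; that is, the length of the shortest square-product sequence with least term n and greatest term g(n) is never equal to 2. -/
/-- `T n` is the least length of a square-product sequence with least term `n`
and greatest term `g n`. -/
noncomputable def T (n : ℕ) : ℕ :=
  sInf {t | ∃ S : Finset ℕ, (∀ a ∈ S, 0 < a) ∧ IsSquare (∏ a ∈ S, a) ∧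
    n ∈ S ∧ g n ∈ S ∧ (∀ a ∈ S, n ≤ a ∧ a ≤ g n) ∧ S.card = t}

theorem T_ne_two (n : ℕ) (hn : 0 < n) : T n ≠ 2 := by
  intro hT
  -- The defining set of T n contains 2
  have h2 : 2 ∈ {t | ∃ S : Finset ℕ, (∀ a ∈ S, 0 < a) ∧ IsSquare (∏ a ∈ S, a) ∧
      n ∈ S ∧ g n ∈ S ∧ (∀ a ∈ S, n ≤ a ∧ a ≤ g n) ∧ S.card = t} := by
    rw [← hT]
    apply Nat.sInf_mem
    by_contra hne
    rw [Set.not_nonempty_iff_eq_empty] at hne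
    rw [T, hne, Nat.sInf_empty] at hT
    exact absurd hT (by norm_num)
  obtain ⟨S, hpos, hsq, hnS, hgS, hbd, hcard⟩ := h2
  have hng : n ≤ g n := (hbd n hnS).2
  have hne : n ≠ g n := by
    intro h
    have hsub : ∀ a ∈ S, a = n := by
      intro a ha
      have := hbd a ha
      omega
    have : S ⊆ {n} := fun a ha => Finset.mem_singleton.mpr (hsub a ha)
    have := Finset.card_le_card this
    simp [hcard] at this
  have hSeq : S = {n, g n} := by
    symm
    apply Finset.eq_of_subset_of_card_le
    · intro a ha
      simp only [Finset.mem_insert, Finset.mem_singleton] at ha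
      rcases ha with h | h <;> subst h <;> assumption
    · rw [hcard, Finset.card_insert_of_notMem (by simp [hne]), Finset.card_singleton]
  have hsq' : IsSquare (n * g n) := by
    rwa [hSeq, Finset.prod_pair hne] at hsq
  -- Case: n is a perfect square
  by_cases hsqn : IsSquare n
  · have hCorr : Corr n n := by
      refine ⟨{n}, by simpa using hn, by simpa using hsqn, by simp, by simp, by simp⟩
    have : g n ≤ n := Nat.sInf_le hCorr
    omega
  -- Case: n is not a perfect square. Write n = a^2 * s with s squarefree.
  obtain ⟨s, a, hbs, hsf⟩ := Nat.sq_mul_squarefree n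
  -- hbs : a ^ 2 * s = n, hsf : Squarefree s
  have ha : 0 < a := by
    rcases Nat.eq_zero_or_pos a with h | h
    · rw [← hbs, h] at hn; simp at hn
    · exact h
  have hs0 : 0 < s := by
    rcases Nat.eq_zero_or_pos s with h | h
    · rw [← hbs, h] at hn; simp at hn
    · exact h
  have hs2 : 2 ≤ s := by
    rcases Nat.lt_or_ge s 2 with h | h
    · interval_cases s
      · exact absurd ⟨a, by rw [← hbs]; ring⟩ hsqn
    · exact h
  have hsa : 2 * a ≤ s * a := Nat.mul_le_mul_right a hs2
  have hen : a ^ 2 * s = n := hbs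
  -- The four-element witness set {n, n+a, n+s*a, n+s*a+a+1}
  have hCorr4 : Corr n (n + s * a + a + 1) := by
    refine ⟨{n, n + a, n + s * a, n + s * a + a + 1}, ?_, ?_, ?_, ?_, ?_⟩
    · intro x hx
      simp only [Finset.mem_insert, Finset.mem_singleton] at hx
      rcases hx with h | h | h | h <;> omega
    · have hm1 : n ∉ ({n + a, n + s * a, n + s * a + a + 1} : Finset ℕ) := by
        simp only [Finset.mem_insert, Finset.mem_singleton]
        omega
      have hm2 : n + a ∉ ({n + s * a, n + s * a + a + 1} : Finset ℕ) := by
        simp only [Finset.mem_insert, Finset.mem_singleton]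
        omega
      have hm3 : n + s * a ∉ ({n + s * a + a + 1} : Finset ℕ) := by
        simp only [Finset.mem_singleton]
        omega
      have hprod : (∏ x ∈ ({n, n + a, n + s * a, n + s * a + a + 1} : Finset ℕ), x) =
          n * ((n + a) * ((n + s * a) * (n + s * a + a + 1))) := by
        rw [Finset.prod_insert hm1, Finset.prod_insert hm2, Finset.prod_insert hm3,
          Finset.prod_singleton]
      rw [hprod, ← hen]
      exact ⟨a ^ 2 * s * (a + 1) * (s * a + 1), by ring⟩
    · simp
    · simp
    · intro x hx
      simp only [Finset.mem_insert, Finset.mem_singleton] at hx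
      rcases hx with h | h | h | h <;> constructor <;> omega
  have hg_le : g n ≤ n + s * a + a + 1 := Nat.sInf_le hCorr4
  -- From IsSquare (n * g n), deduce g n = s * c^2 with c > a
  obtain ⟨m, hm⟩ := hsq'
  have hm2 : m ^ 2 = a ^ 2 * (s * g n) := by
    rw [pow_two, ← hm, ← hen]; ring
  have ham : a ∣ m := by
    rw [← Nat.pow_dvd_pow_iff (two_ne_zero)]
    exact ⟨s * g n, hm2⟩
  obtain ⟨m', hm'⟩ := ham
  have hsg : s * g n = m' * m' := by
    have h2 : a ^ 2 * (s * g n) = a ^ 2 * (m' * m') := by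
      rw [← hm2, hm']; ring
    exact Nat.eq_of_mul_eq_mul_left (by positivity) h2
  have hsm' : s ∣ m' := by
    have hd : s ∣ m' ^ 2 := by
      rw [pow_two, ← hsg]; exact dvd_mul_right s (g n)
    exact (hsf.dvd_pow_iff_dvd two_ne_zero).mp hd
  obtain ⟨c, hc⟩ := hsm'
  have hgn : g n = s * c ^ 2 := by
    have h2 : s * (g n) = s * (s * c ^ 2) := by rw [hsg, hc]; ring
    exact Nat.eq_of_mul_eq_mul_left hs0 h2
  have hca : a < c := by
    have hlt : s * a ^ 2 < s * c ^ 2 := by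
      rw [← hgn]
      calc s * a ^ 2 = n := by rw [← hen]; ring
        _ < g n := by omega
    have : a ^ 2 < c ^ 2 := lt_of_mul_lt_mul_left hlt (Nat.zero_le s)
    exact lt_of_pow_lt_pow_left₀ 2 (Nat.zero_le c) this
  have hge : s * (a + 1) ^ 2 ≤ g n := by
    rw [hgn]
    exact Nat.mul_le_mul_left s (Nat.pow_le_pow_left hca 2)
  have hexp : s * (a + 1) ^ 2 = n + 2 * (s * a) + s := by
    rw [← hen]; ring
  -- Contradiction: n + 2*(s*a) + s ≤ g n ≤ n + s*a + a + 1, but s*a ≥ 2a and s ≥ 2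
  rw [hexp] at hge
  omega
end

section
/- For every positive integer n that is not a perfect square, g(n) < f(n). -/
/-!
Write `n = q² s` with `s ≥ 2` squarefree. Any `k` with `n k` a square has the form `s u²`, so
`f n ≥ s (q + 1)²`. On the other hand
`q² s · q (q s + 1) · q s (q + 1) · (q s + 1)(q + 1) = (q² s (q + 1)(q s + 1))²`,
so `g n ≤ (q s + 1)(q + 1) = q² s + q s + q + 1`, which is less than `s (q + 1)²`
because `s ≥ 2`.
-/

theorem Squarefree.exists_eq_mul_sq_of_isSquare_mul_s18 {s k : ℕ} (hs : Squarefree s)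
    (hsk : IsSquare (s * k)) : ∃ u, k = s * u ^ 2 := by
  obtain ⟨t, ht⟩ := hsk
  obtain ⟨u, rfl⟩ : s ∣ t := (hs.dvd_pow_iff_dvd two_ne_zero).mp ⟨k, by rw [sq, ← ht]⟩
  refine ⟨u, Nat.eq_of_mul_eq_mul_left hs.ne_zero.bot_lt ?_⟩
  rw [ht]; ring

theorem isSquare_of_isSquare_sq_mul_s18 {q m : ℕ} (hq : q ≠ 0) (h : IsSquare (q ^ 2 * m)) :
    IsSquare m := by
  obtain ⟨r, hr⟩ := h
  obtain ⟨t, rfl⟩ : q ∣ r := (Nat.pow_dvd_pow_iff two_ne_zero).mp ⟨m, by rw [sq r, ← hr]⟩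
  refine ⟨t, Nat.eq_of_mul_eq_mul_left (pow_pos hq.bot_lt 2) ?_⟩
  rw [hr]; ring

theorem mul_succ_sq_le_of_isSquare_mul {q s k : ℕ} (hs : Squarefree s) (hk : q ^ 2 * s < k)
    (hsk : IsSquare (s * k)) : s * (q + 1) ^ 2 ≤ k := by
  obtain ⟨u, rfl⟩ := hs.exists_eq_mul_sq_of_isSquare_mul_s18 hsk
  have hqu : q < u := by
    by_contra! h
    have : s * u ^ 2 ≤ s * q ^ 2 := Nat.mul_le_mul_left s (Nat.pow_le_pow_left h 2)
    linarith
  exact Nat.mul_le_mul_left s (Nat.pow_le_pow_left hqu 2)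

theorem corr_sq_mul_of_two_le {q s : ℕ} (hq : 0 < q) (hs : 2 ≤ s) :
    Corr (q ^ 2 * s) (q ^ 2 * s + q * s + q + 1) := by
  have hqs : q < q * s := by nlinarith
  refine ⟨{q ^ 2 * s, q ^ 2 * s + q, q ^ 2 * s + q * s, q ^ 2 * s + q * s + q + 1},
    ?_, ?_, by simp, by simp, ?_⟩
  · simp only [Finset.mem_insert, Finset.mem_singleton]
    rintro a (rfl | rfl | rfl | rfl) <;> positivity
  · rw [Finset.prod_insert (by simp; omega), Finset.prod_insert (by simp; omega),
      Finset.prod_insert (by simp; omega), Finset.prod_singleton]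
    exact ⟨q ^ 2 * s * (q + 1) * (q * s + 1), by ring⟩
  · simp only [Finset.mem_insert, Finset.mem_singleton]
    rintro a (rfl | rfl | rfl | rfl) <;> omega

theorem f_spec {n : ℕ} (hn : n ≠ 0) : n < f n ∧ IsSquare (n * f n) :=
  Nat.sInf_mem (s := {k | n < k ∧ IsSquare (n * k)}) ⟨4 * n, by omega, 2 * n, by ring⟩

theorem g_lt_f_general (n : ℕ) (hns : ¬ IsSquare n) : g n < f n := by
  obtain ⟨s, q, rfl, hs⟩ := Nat.sq_mul_squarefree n
  have hq : q ≠ 0 := by rintro rfl; exact hns ⟨0, by simp⟩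
  have hs2 : 2 ≤ s := by
    by_contra! h
    interval_cases s
    · exact hs.ne_zero rfl
    · exact hns ⟨q, by ring⟩
  obtain ⟨hlt, hsq⟩ := f_spec (by positivity : q ^ 2 * s ≠ 0)
  have hf : s * (q + 1) ^ 2 ≤ f (q ^ 2 * s) :=
    mul_succ_sq_le_of_isSquare_mul hs hlt (isSquare_of_isSquare_sq_mul_s18 hq (by rwa [← mul_assoc]))
  calc g (q ^ 2 * s) ≤ q ^ 2 * s + q * s + q + 1 :=
        Nat.sInf_le (corr_sq_mul_of_two_le hq.bot_lt hs2)
    _ < s * (q + 1) ^ 2 := by nlinarith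
    _ ≤ f (q ^ 2 * s) := hf

theorem g_lt_f (n : ℕ) (hn : 0 < n) (hns : ¬ IsSquare n) : g n < f n :=
  g_lt_f_general n hns
end
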